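/- arXiv:2601.10682 — 2 statements merged into one kernel-verified Lean document; each statement's English description precedes it below -/
import Mathlib

section
/- The automorphism group of T = T_0^{⊗m} (where T_0 = [[1,0],[1,1]]) consists exactly of the permutation matrices induced by coordinate permutations of {0,1}^m: Aut(T) = {P_σ : σ ∈ S_m}, where P_σ e_{(x_1,…,x_m)} = e_{(x_{σ(1)},…,x_{σ(m)})}. Consequently Aut(T) is isomorphic to the symmetric group S_m and |Aut(T)| = m!. -/
/-!
Over `𝔽₂` the entry `T x y` is `1` exactly when `y ≤ x` coordinatewise, so conjugating `T` by
the permutation matrix of `π` gives back `T` iff `π` is an order automorphism of the Boolean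
lattice `{0,1}^m`. An order automorphism permutes the atoms `eᵢ`, say `eᵢ ↦ e_{τ i}`, and since
`xᵢ = 1 ↔ eᵢ ≤ x` it must be the coordinate permutation `x ↦ x ∘ τ⁻¹`. Distinct `σ` give
distinct `P_σ`, so `|Aut T| = |S_m| = m!`.
-/

open Matrix
open scoped Classical

/-- Arikan's kernel `T₀ = [[1,0],[1,1]]` over `F₂`. -/
def T0 : Matrix Bool Bool (ZMod 2) := fun x y =>
  match x, y with
  | false, false => 1
  | false, true  => 0
  | true,  _     => 1

/-- The `m`-fold Kronecker power of `T0`, indexed by `{0,1}^m`. -/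
def polarT : (m : ℕ) → Matrix (Fin m → Bool) (Fin m → Bool) (ZMod 2)
  | 0 => fun _ _ => 1
  | m + 1 => fun x y =>
      T0 (x 0) (y 0) * polarT m (fun i => x i.succ) (fun i => y i.succ)

/-- `P` is a permutation matrix. -/
def IsPermMatrix {X : Type*} [DecidableEq X] [Fintype X]
    (P : Matrix X X (ZMod 2)) : Prop :=
  ∃ π : Equiv.Perm X, ∀ u x, P u x = if u = π x then 1 else 0

/-- The permutation matrix of the coordinate permutation of `{0,1}^m`
induced by `σ ∈ S_m`: its `x`-th column is `e_{(x_{σ 1},…,x_{σ m})}`. -/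
def Pmat (m : ℕ) (σ : Equiv.Perm (Fin m)) :
    Matrix (Fin m → Bool) (Fin m → Bool) (ZMod 2) :=
  fun u x => if u = (fun j => x (σ j)) then 1 else 0

lemma ite_one_zero_eq_ite_one_zero_iff {R : Type*} [MulZeroOneClass R] [Nontrivial R]
    {p q : Prop} [Decidable p] [Decidable q] :
    ((if p then (1 : R) else 0) = if q then 1 else 0) ↔ (p ↔ q) := by
  by_cases p <;> by_cases q <;> simp_all

namespace Pi

variable {ι α : Type*} [DecidableEq ι] [PartialOrder α] [BoundedOrder α]

lemma update_bot_top_le_iff {i : ι} {x : ι → α} :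
    Function.update ⊥ i ⊤ ≤ x ↔ x i = ⊤ := by
  simp [update_le_iff]

variable [IsSimpleOrder α]

lemma isAtom_iff_exists_eq_update_bot_top {x : ι → α} :
    IsAtom x ↔ ∃ i, x = Function.update ⊥ i ⊤ := by
  simp [isAtom_iff_eq_single, isAtom_iff_eq_top]

lemma update_bot_top_injective :
    Function.Injective fun i : ι => Function.update (⊥ : ι → α) i ⊤ := by
  intro i j h
  by_contra hij
  simpa [Function.update_of_ne hij] using congrFun h i

noncomputable def atomEquiv : ι ≃ {x : ι → α // IsAtom x} :=
  Equiv.ofBijective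
    (fun i => ⟨Function.update ⊥ i ⊤, isAtom_iff_exists_eq_update_bot_top.2 ⟨i, rfl⟩⟩)
    ⟨fun _ _ h => update_bot_top_injective (congrArg Subtype.val h), fun ⟨_, hx⟩ => by
      obtain ⟨i, rfl⟩ := isAtom_iff_exists_eq_update_bot_top.1 hx
      exact ⟨i, rfl⟩⟩

end Pi

theorem OrderIso.exists_perm_apply_eq_comp {ι α : Type*} [DecidableEq ι] [PartialOrder α]
    [BoundedOrder α] [IsSimpleOrder α] (φ : (ι → α) ≃o (ι → α)) :
    ∃ σ : Equiv.Perm ι, ∀ x, φ x = x ∘ σ := by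
  let τ : Equiv.Perm ι := Pi.atomEquiv.trans
    ((φ.toEquiv.subtypeEquiv fun x => (φ.isAtom_iff x).symm).trans Pi.atomEquiv.symm)
  have hτ : ∀ i, φ (Function.update ⊥ i ⊤) = Function.update ⊥ (τ i) ⊤ := fun i =>
    congrArg Subtype.val
      (Pi.atomEquiv.apply_symm_apply (φ.toEquiv.subtypeEquiv _ (Pi.atomEquiv i))).symm
  have hτ_apply : ∀ x i, φ x (τ i) = x i := by
    intro x i
    have htop : φ x (τ i) = ⊤ ↔ x i = ⊤ := by
      rw [← Pi.update_bot_top_le_iff, ← hτ, φ.le_iff_le, Pi.update_bot_top_le_iff]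
    rcases eq_bot_or_eq_top (x i) with h | h <;>
      rcases eq_bot_or_eq_top (φ x (τ i)) with h' | h' <;> simp_all
  exact ⟨τ.symm, fun x => funext fun j => by simpa using hτ_apply x (τ.symm j)⟩

def Equiv.Perm.precompOrderIso {ι α : Type*} [Preorder α] (σ : Equiv.Perm ι) :
    (ι → α) ≃o (ι → α) where
  toFun x := x ∘ σ
  invFun x := x ∘ σ.symm
  left_inv x := by ext; simp
  right_inv x := by ext; simp
  map_rel_iff' {x y} := ⟨fun h i => by simpa using h (σ.symm i), fun h i => h (σ i)⟩

lemma Equiv.Perm.permMatrix_mul_mul_transpose_permMatrix {X R : Type*} [Fintype X]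
    [DecidableEq X] [NonAssocSemiring R] (σ : Equiv.Perm X) (T : Matrix X X R) :
    σ.permMatrix R * T * (σ.permMatrix R)ᵀ = T.submatrix σ σ := by
  rw [transpose_permMatrix, Equiv.Perm.permMatrix, Equiv.Perm.permMatrix,
    PEquiv.toMatrix_toPEquiv_mul, PEquiv.mul_toMatrix_toPEquiv, submatrix_submatrix]
  rfl

lemma Equiv.Perm.transpose_permMatrix_apply {X R : Type*} [DecidableEq X] [Zero R] [One R]
    (π : Equiv.Perm X) (u x : X) : (π.permMatrix R)ᵀ u x = if u = π x then 1 else 0 := by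
  simp [Equiv.Perm.permMatrix, eq_comm]

lemma isPermMatrix_iff {X : Type*} [DecidableEq X] [Fintype X] {P : Matrix X X (ZMod 2)} :
    IsPermMatrix P ↔ ∃ π : Equiv.Perm X, P = (π.permMatrix (ZMod 2))ᵀ :=
  exists_congr fun π => by simp only [← Matrix.ext_iff, Equiv.Perm.transpose_permMatrix_apply]

lemma T0_apply (a b : Bool) : T0 a b = if b ≤ a then 1 else 0 := by
  cases a <;> cases b <;> rfl

lemma polarT_apply (m : ℕ) (x y : Fin m → Bool) : polarT m x y = if y ≤ x then 1 else 0 := by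
  induction m with
  | zero => simp [polarT, Subsingleton.elim y x]
  | succ m ih =>
    have hle : y ≤ x ↔ y 0 ≤ x 0 ∧ (fun i : Fin m => y i.succ) ≤ fun i => x i.succ := by
      simp only [Pi.le_def, Fin.forall_fin_succ]
    rw [show polarT (m + 1) x y = T0 (x 0) (y 0) * polarT m _ _ from rfl, ih, T0_apply, hle]
    split_ifs <;> simp_all

lemma polarT_submatrix_eq_iff {m : ℕ} (π : Equiv.Perm (Fin m → Bool)) :
    (polarT m).submatrix π π = polarT m ↔ ∀ x y, π x ≤ π y ↔ x ≤ y := by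
  simp only [← Matrix.ext_iff, submatrix_apply, polarT_apply, ite_one_zero_eq_ite_one_zero_iff]
  exact forall_comm

lemma isPermMatrix_and_conj_polarT_eq_iff {m : ℕ}
    (P : Matrix (Fin m → Bool) (Fin m → Bool) (ZMod 2)) :
    IsPermMatrix P ∧ Pᵀ * polarT m * P = polarT m ↔
      ∃ φ : (Fin m → Bool) ≃o (Fin m → Bool),
        P = (Equiv.Perm.permMatrix (ZMod 2) φ.toEquiv)ᵀ := by
  constructor
  · rintro ⟨hP, hT⟩
    obtain ⟨π, rfl⟩ := isPermMatrix_iff.1 hP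
    rw [transpose_transpose, π.permMatrix_mul_mul_transpose_permMatrix,
      polarT_submatrix_eq_iff] at hT
    exact ⟨⟨π, hT _ _⟩, rfl⟩
  · rintro ⟨φ, rfl⟩
    refine ⟨isPermMatrix_iff.2 ⟨φ.toEquiv, rfl⟩, ?_⟩
    rw [transpose_transpose, Equiv.Perm.permMatrix_mul_mul_transpose_permMatrix,
      polarT_submatrix_eq_iff]
    exact fun _ _ => φ.le_iff_le

lemma Pmat_eq (m : ℕ) (σ : Equiv.Perm (Fin m)) :
    Pmat m σ = (Equiv.Perm.permMatrix (ZMod 2) σ.precompOrderIso.toEquiv)ᵀ := by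
  ext u x
  rw [Equiv.Perm.transpose_permMatrix_apply]
  rfl

lemma Pmat_injective (m : ℕ) : Function.Injective (Pmat m) := by
  intro σ τ h
  ext i : 1
  have hcomp : ∀ x : Fin m → Bool, x ∘ σ = x ∘ τ := fun x =>
    (ite_one_zero_eq_ite_one_zero_iff.1 (congrFun₂ h (x ∘ σ) x)).1 rfl
  simpa [eq_comm] using congrFun (hcomp fun j => decide (j = σ i)) i

/-- `Aut(T0^{⊗m})` consists exactly of the permutation matrices
induced by coordinate permutations of `{0,1}^m`; in particular it has
cardinality `m!`. -/
theorem stmt_4 (m : ℕ) :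
    ({P : Matrix (Fin m → Bool) (Fin m → Bool) (ZMod 2) |
        IsPermMatrix P ∧ Pᵀ * polarT m * P = polarT m}
      = {P | ∃ σ : Equiv.Perm (Fin m), P = Pmat m σ}) ∧
    Nat.card {P : Matrix (Fin m → Bool) (Fin m → Bool) (ZMod 2) //
        IsPermMatrix P ∧ Pᵀ * polarT m * P = polarT m} = Nat.factorial m := by
  have hAut : {P : Matrix (Fin m → Bool) (Fin m → Bool) (ZMod 2) |
      IsPermMatrix P ∧ Pᵀ * polarT m * P = polarT m} = Set.range (Pmat m) := by
    ext P
    simp only [Set.mem_ofPred_eq, isPermMatrix_and_conj_polarT_eq_iff, Set.mem_range, Pmat_eq]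
    constructor
    · rintro ⟨φ, rfl⟩
      obtain ⟨σ, hσ⟩ := φ.exists_perm_apply_eq_comp
      exact ⟨σ, by congr; exact DFunLike.ext _ _ fun x => (hσ x).symm⟩
    · rintro ⟨σ, rfl⟩
      exact ⟨σ.precompOrderIso, rfl⟩
  refine ⟨by rw [hAut]; ext; simp [eq_comm], ?_⟩
  rw [← Set.coe_ofPred, hAut, Nat.card_range_of_injective (Pmat_injective m), Nat.card_perm,
    Nat.card_fin]
end

section
/- Fix M ≥ 1, δ ∈ (0,1), and p ∈ (0,1). Let K ~ Binomial(M, p), and let u_k for k < M be the unique value with F(k;u_k) = δ (where F(k;q) = P(Binomial(M,q) ≤ k)), and u_M := 1. Then P(p ≤ u_K) ≥ 1 − δ. -/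
/-- The binomial lower-tail function `F(k;q) = Σ_{j≤k} C(M,j) q^j (1−q)^{M−j}`. -/
noncomputable def Fbin (M k : ℕ) (q : ℝ) : ℝ :=
  ∑ j ∈ Finset.range (k + 1), (M.choose j : ℝ) * q ^ j * (1 - q) ^ (M - j)

/-!
The tail `F(k; ·)` is a sum of Bernstein polynomials whose derivative telescopes to
`-M · b_{M-1,k}`, so it is antitone on `[0,1]`. If `k*` is the largest `k` with `u_k < p`, then
`k* < M` because `u_M = 1`, and the bad event `{u_K < p}` is contained in `{K ≤ k*}`, whose
probability is `F(k*; p) ≤ F(k*; u_{k*}) = δ`.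
-/

open Finset Polynomial

theorem derivative_sum_bernsteinPolynomial {R : Type*} [CommRing R] (n k : ℕ) :
    derivative (∑ j ∈ range (k + 1), bernsteinPolynomial R n j) =
      -n * bernsteinPolynomial R (n - 1) k := by
  induction k with
  | zero => simp [bernsteinPolynomial.derivative_zero]
  | succ k ih =>
    rw [sum_range_succ, derivative_add, ih, bernsteinPolynomial.derivative_succ]
    ring

theorem Fbin_eq_eval (M k : ℕ) (q : ℝ) :
    Fbin M k q = (∑ j ∈ range (k + 1), bernsteinPolynomial ℝ M j).eval q := by
  simp [Fbin, eval_finsetSum, bernsteinPolynomial]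

theorem hasDerivAt_Fbin (M k : ℕ) (q : ℝ) :
    HasDerivAt (Fbin M k) (-M * (bernsteinPolynomial ℝ (M - 1) k).eval q) q := by
  have h := (∑ j ∈ range (k + 1), bernsteinPolynomial ℝ M j).hasDerivAt q
  rw [derivative_sum_bernsteinPolynomial] at h
  simpa [funext (Fbin_eq_eval M k)] using h

theorem Fbin_antitoneOn (M k : ℕ) : AntitoneOn (Fbin M k) (Set.Icc 0 1) := by
  refine antitoneOn_of_deriv_nonpos (convex_Icc 0 1)
    (fun q _ => (hasDerivAt_Fbin M k q).continuousAt.continuousWithinAt)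
    (fun q _ => (hasDerivAt_Fbin M k q).differentiableAt.differentiableWithinAt) ?_
  intro q hq
  rw [interior_Icc] at hq
  have hq' : 0 ≤ 1 - q := by linarith [hq.2]
  have hb : 0 ≤ (bernsteinPolynomial ℝ (M - 1) k).eval q := by
    simp only [bernsteinPolynomial, eval_mul, eval_pow, eval_sub, eval_one, eval_X, eval_natCast]
    exact mul_nonneg (mul_nonneg (Nat.cast_nonneg _) (pow_nonneg hq.1.le _)) (pow_nonneg hq' _)
  rw [(hasDerivAt_Fbin M k q).deriv]
  rw [neg_mul]
  exact neg_nonpos.mpr (mul_nonneg (Nat.cast_nonneg M) hb)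

theorem sum_binomial_le_Fbin (M n : ℕ) {p : ℝ} (hp : p ∈ Set.Icc (0 : ℝ) 1) {s : Finset ℕ}
    (hs : ∀ k ∈ s, k ≤ n) :
    ∑ k ∈ s, (M.choose k : ℝ) * p ^ k * (1 - p) ^ (M - k) ≤ Fbin M n p :=
  sum_le_sum_of_subset_of_nonneg (fun k hk => mem_range_succ_iff.mpr (hs k hk))
    fun _ _ _ => mul_nonneg (mul_nonneg (Nat.cast_nonneg _) (pow_nonneg hp.1 _))
      (pow_nonneg (sub_nonneg.mpr hp.2) _)

theorem sum_binomial_eq_one (M : ℕ) (p : ℝ) :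
    ∑ k ∈ range (M + 1), (M.choose k : ℝ) * p ^ k * (1 - p) ^ (M - k) = 1 := by
  have h := congrArg (eval p) (bernsteinPolynomial.sum ℝ M)
  simpa [eval_finsetSum, bernsteinPolynomial] using h

theorem sum_binomial_filter_lt_le (M : ℕ) {δ p : ℝ} (hδ : 0 ≤ δ) (hp : p ∈ Set.Icc (0 : ℝ) 1)
    {u : ℕ → ℝ} (hu : ∀ k < M, u k ∈ Set.Icc (0 : ℝ) 1 ∧ Fbin M k (u k) = δ) (huM : p ≤ u M) :
    ∑ k ∈ (range (M + 1)).filter (fun k => u k < p),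
      (M.choose k : ℝ) * p ^ k * (1 - p) ^ (M - k) ≤ δ := by
  set bad := (range (M + 1)).filter (fun k => u k < p)
  rcases bad.eq_empty_or_nonempty with hempty | hne
  · simpa [hempty] using hδ
  obtain ⟨hkM, hkp⟩ := mem_filter.mp (bad.max'_mem hne)
  have hlt : bad.max' hne < M :=
    lt_of_le_of_ne (mem_range_succ_iff.mp hkM) fun h => (h ▸ huM).not_gt hkp
  obtain ⟨hu_mem, hFu⟩ := hu _ hlt
  calc _ ≤ Fbin M (bad.max' hne) p := sum_binomial_le_Fbin M _ hp fun k hk => bad.le_max' k hk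
    _ ≤ Fbin M (bad.max' hne) (u (bad.max' hne)) := Fbin_antitoneOn M _ hu_mem hp hkp.le
    _ = δ := hFu

theorem stmt_16_general (M : ℕ) (δ p : ℝ)
    (hδ : δ ∈ Set.Ioo (0 : ℝ) 1) (hp : p ∈ Set.Ioo (0 : ℝ) 1)
    (u : ℕ → ℝ)
    (hu : ∀ k < M, u k ∈ Set.Ioo (0 : ℝ) 1 ∧ Fbin M k (u k) = δ)
    (huM : u M = 1) :
    1 - δ ≤ ∑ k ∈ Finset.range (M + 1),
        if p ≤ u k then (M.choose k : ℝ) * p ^ k * (1 - p) ^ (M - k) else 0 := by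
  have hbad := sum_binomial_filter_lt_le M hδ.1.le (Set.Ioo_subset_Icc_self hp)
    (fun k hk => ⟨Set.Ioo_subset_Icc_self (hu k hk).1, (hu k hk).2⟩) (huM ▸ hp.2.le)
  have hsplit := sum_filter_add_sum_filter_not (range (M + 1)) (fun k => p ≤ u k)
    fun k => (M.choose k : ℝ) * p ^ k * (1 - p) ^ (M - k)
  simp only [not_le, sum_binomial_eq_one] at hsplit
  rw [← sum_filter]
  linarith

/-- with `K ~ Binomial(M,p)` and `u_k` the unique value with
`F(k;u_k) = δ` for `k < M` (and `u_M := 1`), we have `P(p ≤ u_K) ≥ 1 − δ`. -/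
theorem stmt_16 (M : ℕ) (hM : 1 ≤ M) (δ p : ℝ)
    (hδ : δ ∈ Set.Ioo (0 : ℝ) 1) (hp : p ∈ Set.Ioo (0 : ℝ) 1)
    (u : ℕ → ℝ)
    (hu : ∀ k < M, u k ∈ Set.Ioo (0 : ℝ) 1 ∧ Fbin M k (u k) = δ)
    (huM : u M = 1) :
    1 - δ ≤ ∑ k ∈ Finset.range (M + 1),
        if p ≤ u k then (M.choose k : ℝ) * p ^ k * (1 - p) ^ (M - k) else 0 :=
  stmt_16_general M δ p hδ hp u hu huM
end
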